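/- arXiv:1607.04944 — 3 statements merged into one kernel-verified Lean document; each statement's English description precedes it below -/
import Mathlib

section
/- For j ∈ ℤ≥0, let ψⱼ(t) = √2·e^{−t}·Λⱼ(2t) for t > 0 and ψⱼ(t) = 0 for t < 0, where Λⱼ is the j-th normalized Laguerre polynomial. Then the Fourier transform of ψⱼ is (Fψⱼ)(λ) = ((λ−i)/(λ+i))ʲ · i√2/(λ+i), where (Ff)(λ) = ∫₀^∞ f(t)e^{iλt} dt. -/
open MeasureTheory Complex

/-- The `n`-th Laguerre polynomial `Λₙ(x) = Σ_{k=0}^{n} (-1)^k C(n,k) x^k / k!`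
(normalized so that the functions `√2·e^{-t}Λₙ(2t)` are orthonormal in `L²(0,∞)`). -/
noncomputable def laguerre (n : ℕ) (x : ℝ) : ℝ :=
  ∑ k ∈ Finset.range (n + 1), (-1 : ℝ) ^ k * (n.choose k) * x ^ k / (k.factorial)

/-- The Laguerre function `ψₙ(t) = √2 e^{-t} Λₙ(2t)` for `t > 0`, `0` otherwise. -/
noncomputable def psi (n : ℕ) (t : ℝ) : ℝ :=
  if 0 < t then Real.sqrt 2 * Real.exp (-t) * laguerre n (2 * t) else 0

/-!
On `t > 0`, `ψⱼ(t) e^{iλt} = √2 Λⱼ(2t) e^{-ct}` with `c = 1 - iλ = -i(λ + i)`, `Re c = 1`. Expanding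
the Laguerre polynomial and integrating term by term with `∫₀^∞ tᵏ e^{-ct} dt = k!/c^{k+1}`, the
binomial theorem gives the Laplace transform `∫₀^∞ Λₙ(at) e^{-ct} dt = ((c - a)/c)ⁿ / c`. For
`a = 2` one has `c - 2 = -i(λ - i)`, so `(c - 2)/c = (λ - i)/(λ + i)` and `1/c = i/(λ + i)`.
-/

open Filter Set Topology
open scoped Nat

section Laplace

variable {c : ℂ}

lemma norm_ofReal_pow_mul_cexp_neg_mul {t : ℝ} (ht : 0 ≤ t) (m : ℕ) :
    ‖(t : ℂ) ^ m * cexp (-c * t)‖ = t ^ m * Real.exp (-c.re * t) := by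
  rw [norm_mul, norm_exp, norm_pow, norm_real, Real.norm_of_nonneg ht]
  simp

lemma tendsto_pow_mul_cexp_neg_mul_atTop (hc : 0 < c.re) (m : ℕ) :
    Tendsto (fun t : ℝ => (t : ℂ) ^ m * cexp (-c * t)) atTop (𝓝 0) := by
  rw [tendsto_zero_iff_norm_tendsto_zero]
  refine (tendsto_rpow_mul_exp_neg_mul_atTop_nhds_zero m c.re hc).congr' ?_
  filter_upwards [eventually_ge_atTop 0] with t ht
  rw [norm_ofReal_pow_mul_cexp_neg_mul ht, Real.rpow_natCast]

lemma integrableOn_pow_mul_cexp_neg_mul (hc : 0 < c.re) (m : ℕ) :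
    IntegrableOn (fun t : ℝ => (t : ℂ) ^ m * cexp (-c * t)) (Ioi 0) := by
  have hdom : IntegrableOn (fun t : ℝ => t ^ (m : ℝ) * Real.exp (-c.re * t ^ (1 : ℝ))) (Ioi 0) :=
    integrableOn_rpow_mul_exp_neg_mul_rpow (by linarith [m.cast_nonneg (α := ℝ)]) one_pos hc
  refine hdom.mono' (by fun_prop) ?_
  filter_upwards [ae_restrict_mem measurableSet_Ioi] with t ht
  rw [norm_ofReal_pow_mul_cexp_neg_mul (le_of_lt ht), Real.rpow_natCast, Real.rpow_one]

lemma integral_pow_mul_cexp_neg_mul (hc : 0 < c.re) (m : ℕ) :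
    ∫ t in Ioi (0 : ℝ), (t : ℂ) ^ m * cexp (-c * t) = m ! / c ^ (m + 1) := by
  have hc0 : c ≠ 0 := fun h => by simp [h] at hc
  have hexp (t : ℝ) : HasDerivAt (fun s : ℝ => -cexp (-c * s) / c) (cexp (-c * t)) t := by
    have h : HasDerivAt (fun s : ℝ => cexp (-c * s)) (cexp (-c * t) * (-c)) t := by
      simpa using ((hasDerivAt_id (t : ℂ)).const_mul (-c)).cexp.comp_ofReal
    exact (h.neg.div_const c).congr_deriv (by field_simp)
  induction m with
  | zero =>
    have := integral_Ioi_of_hasDerivAt_of_tendsto' (fun t _ => hexp t)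
      (by simpa using integrableOn_pow_mul_cexp_neg_mul hc 0)
      (by simpa using ((tendsto_pow_mul_cexp_neg_mul_atTop hc 0).neg.div_const c))
    simpa [neg_div] using this
  | succ m ih =>
    have hpow (t : ℝ) : HasDerivAt (fun s : ℝ => (s : ℂ) ^ (m + 1)) ((m + 1) * (t : ℂ) ^ m) t := by
      simpa using (hasDerivAt_pow (m + 1) (t : ℂ)).comp_ofReal
    have huv_cont : Continuous fun t : ℝ => (t : ℂ) ^ (m + 1) * (-cexp (-c * t) / c) := by
      fun_prop
    have hibp := integral_Ioi_mul_deriv_eq_deriv_mul (a' := 0) (b' := 0)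
      (fun t _ => hpow t) (fun t _ => hexp t) (integrableOn_pow_mul_cexp_neg_mul hc (m + 1))
      (IntegrableOn.congr_fun ((integrableOn_pow_mul_cexp_neg_mul hc m).const_mul (-(m + 1) / c))
        (fun t _ => by simp only [Pi.mul_apply]; ring) measurableSet_Ioi)
      ((huv_cont.tendsto' 0 0 (by simp)).mono_left nhdsWithin_le_nhds)
      (by
        convert (tendsto_pow_mul_cexp_neg_mul_atTop hc (m + 1)).neg.div_const c using 2 with t
        · simp only [Pi.mul_apply]
          ring
        · simp)
    have hintegrand (t : ℝ) : (m + 1 : ℂ) * (t : ℂ) ^ m * (-cexp (-c * t) / c)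
        = -((m + 1) / c) * ((t : ℂ) ^ m * cexp (-c * t)) := by ring
    rw [hibp, integral_congr_ae (ae_of_all _ hintegrand), integral_const_mul, ih, Nat.factorial_succ]
    push_cast
    field_simp
    ring

lemma ofReal_laguerre_mul_eq_sum (n : ℕ) (a t : ℝ) (z : ℂ) :
    (laguerre n (a * t) : ℂ) * z =
      ∑ k ∈ Finset.range (n + 1), ((n.choose k : ℂ) * (-a) ^ k / k !) * ((t : ℂ) ^ k * z) := by
  rw [laguerre, ofReal_sum, Finset.sum_mul]
  refine Finset.sum_congr rfl fun k _ => ?_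
  push_cast
  ring

lemma integral_laguerre_mul_cexp_neg_mul (hc : 0 < c.re) (n : ℕ) (a : ℝ) :
    ∫ t in Ioi (0 : ℝ), (laguerre n (a * t) : ℂ) * cexp (-c * t) = ((c - a) / c) ^ n / c := by
  have hc0 : c ≠ 0 := fun h => by simp [h] at hc
  simp_rw [ofReal_laguerre_mul_eq_sum]
  rw [integral_finsetSum _ fun k _ => (integrableOn_pow_mul_cexp_neg_mul hc k).const_mul _]
  simp_rw [integral_const_mul, integral_pow_mul_cexp_neg_mul hc]
  rw [sub_div, div_self hc0, ← neg_add_eq_sub, add_pow, Finset.sum_div]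
  refine Finset.sum_congr rfl fun k _ => ?_
  have hk : (k ! : ℂ) ≠ 0 := Nat.cast_ne_zero.2 k.factorial_ne_zero
  rw [← neg_div, div_pow, one_pow]
  field_simp
  ring

end Laplace

/-- The Fourier transform of the Laguerre function `ψⱼ` is
`(Fψⱼ)(λ) = ((λ-i)/(λ+i))ʲ · i√2/(λ+i)`, where `(Ff)(λ) = ∫₀^∞ f(t)e^{iλt}dt`. -/
theorem stmt6 (j : ℕ) (l : ℝ) :
    ∫ t in Set.Ioi (0 : ℝ), (psi j t : ℂ) * Complex.exp (Complex.I * l * t) =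
      (((l : ℂ) - Complex.I) / ((l : ℂ) + Complex.I)) ^ j *
        (Complex.I * (Real.sqrt 2 : ℂ)) / ((l : ℂ) + Complex.I) := by
  obtain ⟨c, hc⟩ : ∃ c : ℂ, c = -I * (l + I) := ⟨_, rfl⟩
  have hc_re : 0 < c.re := by simp [hc]
  have hpsi : ∀ t ∈ Ioi (0 : ℝ), (psi j t : ℂ) * cexp (I * l * t)
      = Real.sqrt 2 * ((laguerre j (2 * t) : ℂ) * cexp (-c * t)) := by
    intro t ht
    have hexp : -c * t = -(t : ℂ) + I * l * t := by rw [hc]; linear_combination (t : ℂ) * I_sq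
    rw [psi, if_pos (mem_Ioi.mp ht), hexp, exp_add]
    push_cast
    ring
  have hc_sub : c - 2 = -I * (l - I) := by rw [hc]; linear_combination (-2 : ℂ) * I_sq
  have hl : (l : ℂ) + I ≠ 0 := fun h => by simpa using congrArg im h
  rw [setIntegral_congr_fun measurableSet_Ioi hpsi, integral_const_mul,
    integral_laguerre_mul_cexp_neg_mul hc_re, ofReal_ofNat, hc_sub, hc,
    mul_div_mul_left _ _ (neg_ne_zero.mpr I_ne_zero)]
  field_simp
  rw [I_sq, neg_one_mul]
end

section
/- Let g ∈ L^∞(ℝ) be a matching function (g·g̃ = 1), and let W(g) = PW⁰(g)P and define P(g) := JQW⁰(g)P restricted to ker W(g) ⊆ L²(ℝ⁺). Then P(g) maps ker W(g) into itself and P(g)² = I on ker W(g). -/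
/-- Let `X = L²(ℝ)` with `P` the projection onto `L²(ℝ⁺)`, `Q = 1 - P`, `J` the
reflection (`J² = 1`, `JP = QJ`), and `W0 : a ↦ W⁰(a)` multiplicative, unital, with
`J W⁰(a) J = W⁰(ã)`. If `g` is a matching function (`g·g̃ = 1`), then the operator
`P(g) = J Q W⁰(g) P` maps `ker W(g) = {f ∈ im P : P W⁰(g) f = 0}` into itself and
satisfies `P(g)² = I` on `ker W(g)`. -/
theorem stmt13 {X : Type*} [AddCommGroup X] [Module ℂ X]
    (P Q J : Module.End ℂ X) (W0 : (ℝ → ℂ) → Module.End ℂ X)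
    (hP : P * P = P) (hQ : Q = 1 - P) (hJ : J * J = 1) (hJP : J * P = Q * J)
    (hmul : ∀ a b : ℝ → ℂ, W0 (a * b) = W0 a * W0 b) (hone : W0 1 = 1)
    (hrefl : ∀ a : ℝ → ℂ, J * W0 a * J = W0 (fun t => a (-t)))
    (g : ℝ → ℂ) (hg : g * (fun t => g (-t)) = 1) :
    ∀ x ∈ LinearMap.range P ⊓ LinearMap.ker (P * W0 g),
      (J * Q * W0 g * P) x ∈ LinearMap.range P ⊓ LinearMap.ker (P * W0 g) ∧
      (J * Q * W0 g * P) ((J * Q * W0 g * P) x) = x := by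
  -- algebraic facts
  have hP' : P = J * Q * J := by
    calc P = (J * J) * P := by rw [hJ, one_mul]
    _ = J * (J * P) := by rw [mul_assoc]
    _ = J * (Q * J) := by rw [hJP]
    _ = J * Q * J := by rw [mul_assoc]
  have hPJ : P * J = J * Q := by
    rw [hP', mul_assoc, hJ, mul_one]
  have hgJ : W0 g * J = J * W0 (fun t => g (-t)) := by
    have h := hrefl g
    calc W0 g * J = (J * J) * W0 g * J := by rw [hJ, one_mul]
    _ = J * (J * W0 g * J) := by rw [mul_assoc, mul_assoc, mul_assoc]
    _ = J * W0 (fun t => g (-t)) := by rw [h]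
  have hgg : W0 (fun t => g (-t)) * W0 g = 1 := by
    rw [← hmul]
    have h1 : (fun t => g (-t)) * g = 1 := by rw [mul_comm]; exact hg
    rw [h1, hone]
  intro x hx
  obtain ⟨⟨z, hz⟩, hker⟩ := hx
  have hPx : P x = x := by
    rw [← hz, ← Module.End.mul_apply, hP]
  have hxker : P (W0 g x) = 0 := hker
  have hQx : Q x = 0 := by
    rw [hQ, LinearMap.sub_apply, Module.End.one_apply, hPx, sub_self]
  have hQW : Q (W0 g x) = W0 g x := by
    rw [hQ, LinearMap.sub_apply, Module.End.one_apply, hxker, sub_zero]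
  -- the image of x
  have hy : (J * Q * W0 g * P) x = J (W0 g x) := by
    simp only [Module.End.mul_apply, hPx, hQW]
  -- W0 g (J (W0 g x)) = J x
  have hkey : W0 g (J (W0 g x)) = J x := by
    have h1 := DFunLike.congr_fun hgJ (W0 g x)
    simp only [Module.End.mul_apply] at h1
    have h2 : (W0 fun t => g (-t)) ((W0 g) x) = x := by
      rw [← Module.End.mul_apply, hgg, Module.End.one_apply]
    rw [h1, h2]
  have hPJx : P (J x) = 0 := by
    have h1 := DFunLike.congr_fun hPJ x
    simp only [Module.End.mul_apply] at h1
    rw [h1, hQx, map_zero]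
  constructor
  · constructor
    · refine ⟨J (W0 g x), ?_⟩
      have h1 := DFunLike.congr_fun hPJ (W0 g x)
      simp only [Module.End.mul_apply] at h1
      rw [hy, h1, hQW]
    · show P (W0 g ((J * Q * W0 g * P) x)) = 0
      rw [hy, hkey, hPJx]
  · rw [hy]
    have hPy : P (J (W0 g x)) = J (W0 g x) := by
      have h1 := DFunLike.congr_fun hPJ (W0 g x)
      simp only [Module.End.mul_apply] at h1
      rw [h1, hQW]
    have hQJx : Q (J x) = J x := by
      have h1 : Q * J = J * P := hJP.symm
      have h2 := DFunLike.congr_fun h1 x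
      simp only [Module.End.mul_apply] at h2
      rw [h2, hPx]
    simp only [Module.End.mul_apply, hPy, hkey, hQJx]
    rw [← Module.End.mul_apply, hJ, Module.End.one_apply]
end

section
/- Let g be a matching function (g·g̃ = 1) admitting a Wiener–Hopf factorization g = g₋ · e^{iνt} · ((t−i)/(t+i))ⁿ · g₊ with g₋(0) = 1, where g₊^{±1} extend holomorphically and boundedly to the upper half-plane and g₋^{±1} to the lower half-plane. Then g₋ = σ(g)·g̃₊⁻¹ where σ(g) = (−1)ⁿ g(0), and σ(g) ∈ {+1, −1}. -/
open Complex Filter Bornology Set Topology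

lemma glue_halfplanes (Θ Φ : ℂ → ℂ)
    (hΘ : DifferentiableOn ℂ Θ {z : ℂ | 0 ≤ z.im})
    (hΦ : DifferentiableOn ℂ Φ {z : ℂ | z.im ≤ 0})
    (heq : ∀ z : ℂ, z.im = 0 → Θ z = Φ z) :
    Differentiable ℂ (fun z => if 0 ≤ z.im then Θ z else Φ z) := by
  set H : ℂ → ℂ := fun z => if 0 ≤ z.im then Θ z else Φ z with hHdef
  have hHU : ∀ z : ℂ, 0 ≤ z.im → H z = Θ z := fun z hz => if_pos hz
  have hHL : ∀ z : ℂ, z.im ≤ 0 → H z = Φ z := by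
    intro z hz
    rcases lt_or_eq_of_le hz with h | h
    · exact if_neg (not_le.2 h)
    · rw [hHU z h.ge, heq z h]
  intro x
  rcases lt_trichotomy x.im 0 with hx | hx | hx
  · have hopen : IsOpen {z : ℂ | z.im < 0} := isOpen_lt Complex.continuous_im continuous_const
    have hmem : {z : ℂ | z.im ≤ 0} ∈ 𝓝 x :=
      mem_of_superset (hopen.mem_nhds hx) (fun z hz => le_of_lt (Set.mem_setOf.1 hz))
    exact (hΦ.differentiableAt hmem).congr_of_eventuallyEq
      (eventually_of_mem hmem fun z hz => hHL z hz)
  · -- boundary point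
    have hxU : x ∈ {z : ℂ | 0 ≤ z.im} := le_of_eq hx.symm
    have hxL : x ∈ {z : ℂ | z.im ≤ 0} := le_of_eq hx
    have ha := (hΘ x hxU).hasDerivWithinAt
    have hb := (hΦ x hxL).hasDerivWithinAt
    set a := derivWithin Θ {z : ℂ | 0 ≤ z.im} x
    set b := derivWithin Φ {z : ℂ | z.im ≤ 0} x
    have haH : HasDerivWithinAt H a {z : ℂ | 0 ≤ z.im} x :=
      ha.congr (fun z hz => hHU z hz) (hHU x hxU)
    have hbH : HasDerivWithinAt H b {z : ℂ | z.im ≤ 0} x :=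
      hb.congr (fun z hz => hHL z hz) (hHL x hxL)
    -- the punctured real line filter
    have hxr : ((x.re : ℝ) : ℂ) = x := Complex.ext rfl (by simp [hx])
    have hmapto : Tendsto (fun t : ℝ => (t : ℂ)) (𝓝[≠] x.re)
        (𝓝[{z : ℂ | z.im = 0} \ {x}] x) := by
      rw [tendsto_nhdsWithin_iff]
      constructor
      · have h1 : Tendsto (fun t : ℝ => (t : ℂ)) (𝓝 x.re) (𝓝 ((x.re : ℝ) : ℂ)) :=
          Complex.continuous_ofReal.continuousAt
        rw [hxr] at h1
        exact h1.mono_left nhdsWithin_le_nhds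
      · filter_upwards [self_mem_nhdsWithin] with t ht
        refine ⟨by simp, ?_⟩
        simp only [mem_singleton_iff]
        intro hcon
        apply ht
        have : ((t : ℂ)).re = x.re := by rw [hcon]
        simpa using this
    have hne : (𝓝[{z : ℂ | z.im = 0} \ {x}] x).NeBot := hmapto.neBot
    have hsubU : {z : ℂ | z.im = 0} \ {x} ⊆ {z : ℂ | 0 ≤ z.im} \ {x} :=
      fun z hz => ⟨le_of_eq hz.1.symm, hz.2⟩
    have hsubL : {z : ℂ | z.im = 0} \ {x} ⊆ {z : ℂ | z.im ≤ 0} \ {x} :=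
      fun z hz => ⟨le_of_eq hz.1, hz.2⟩
    have ta : Tendsto (slope H x) (𝓝[{z : ℂ | z.im = 0} \ {x}] x) (𝓝 a) :=
      (hasDerivWithinAt_iff_tendsto_slope.1 haH).mono_left (nhdsWithin_mono _ hsubU)
    have tb : Tendsto (slope H x) (𝓝[{z : ℂ | z.im = 0} \ {x}] x) (𝓝 b) :=
      (hasDerivWithinAt_iff_tendsto_slope.1 hbH).mono_left (nhdsWithin_mono _ hsubL)
    have hab : a = b := tendsto_nhds_unique ta tb
    have hunion : HasDerivWithinAt H a ({z : ℂ | 0 ≤ z.im} ∪ {z : ℂ | z.im ≤ 0}) x :=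
      haH.union (hab ▸ hbH)
    have huniv : ({z : ℂ | 0 ≤ z.im} ∪ {z : ℂ | z.im ≤ 0}) = univ := by
      ext z; simpa using le_total 0 z.im
    rw [huniv, hasDerivWithinAt_univ] at hunion
    exact hunion.differentiableAt
  · have hopen : IsOpen {z : ℂ | 0 < z.im} := isOpen_lt continuous_const Complex.continuous_im
    have hmem : {z : ℂ | 0 ≤ z.im} ∈ 𝓝 x :=
      mem_of_superset (hopen.mem_nhds hx) (fun z hz => le_of_lt (Set.mem_setOf.1 hz))
    exact (hΘ.differentiableAt hmem).congr_of_eventuallyEq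
      (eventually_of_mem hmem fun z hz => hHU z hz)


/-- Let `g` be a matching function (`g(t)g(-t) = 1`) with a Wiener-Hopf factorization
`g(t) = g₋(t) e^{iνt} ((t-i)/(t+i))ⁿ g₊(t)`, normalized by `g₋(0) = 1`, where `g₊^{±1}`
extend holomorphically and boundedly to the closed upper half-plane and `g₋^{±1}` to the
closed lower half-plane. Then `g₋ = σ(g)·g̃₊⁻¹` with `σ(g) = (-1)ⁿ g(0) ∈ {1, -1}`. -/
theorem stmt14 (g gm gp : ℝ → ℂ) (ν : ℝ) (n : ℤ)
    (hfact : ∀ t : ℝ, g t = gm t * Complex.exp (Complex.I * ν * t) *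
      (((t : ℂ) - Complex.I) / ((t : ℂ) + Complex.I)) ^ n * gp t)
    (hnorm : gm 0 = 1)
    (hmatch : ∀ t : ℝ, g t * g (-t) = 1)
    (hgp : ∃ F : ℂ → ℂ, (∀ t : ℝ, F t = gp t) ∧
      DifferentiableOn ℂ F {z | 0 ≤ z.im} ∧ Bornology.IsBounded (F '' {z | 0 ≤ z.im}))
    (hgpinv : ∃ F : ℂ → ℂ, (∀ t : ℝ, F t = (gp t)⁻¹) ∧
      DifferentiableOn ℂ F {z | 0 ≤ z.im} ∧ Bornology.IsBounded (F '' {z | 0 ≤ z.im}))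
    (hgm : ∃ F : ℂ → ℂ, (∀ t : ℝ, F t = gm t) ∧
      DifferentiableOn ℂ F {z | z.im ≤ 0} ∧ Bornology.IsBounded (F '' {z | z.im ≤ 0}))
    (hgminv : ∃ F : ℂ → ℂ, (∀ t : ℝ, F t = (gm t)⁻¹) ∧
      DifferentiableOn ℂ F {z | z.im ≤ 0} ∧ Bornology.IsBounded (F '' {z | z.im ≤ 0})) :
    (∀ t : ℝ, gm t = ((-1 : ℂ) ^ n * g 0) * (gp (-t))⁻¹) ∧
    ((-1 : ℂ) ^ n * g 0 = 1 ∨ (-1 : ℂ) ^ n * g 0 = -1) := by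
  obtain ⟨Fp, hFp, hFpd, hFpb⟩ := hgp
  obtain ⟨Fpi, hFpi, hFpid, hFpib⟩ := hgpinv
  obtain ⟨Fm, hFm, hFmd, hFmb⟩ := hgm
  obtain ⟨Fmi, hFmi, hFmid, hFmib⟩ := hgminv
  -- key matching identity for the factors
  have hplus : ∀ t : ℝ, ((t : ℂ) + Complex.I) ≠ 0 := by
    intro t h
    have := congrArg Complex.im h
    simpa using this
  have hminus : ∀ t : ℝ, ((t : ℂ) - Complex.I) ≠ 0 := by
    intro t h
    have := congrArg Complex.im h
    simpa using this
  have hφ : ∀ t : ℝ, (gm t * gp (-t)) * (gm (-t) * gp t) = 1 := by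
    intro t
    have key := hmatch t
    rw [hfact t, hfact (-t)] at key
    have hA : Complex.exp (Complex.I * ν * t) * Complex.exp (Complex.I * ν * (-t : ℝ)) = 1 := by
      rw [← Complex.exp_add]
      push_cast
      ring_nf
      exact Complex.exp_zero
    have hB : (((t : ℂ) - Complex.I) / ((t : ℂ) + Complex.I)) ^ n *
        ((((-t : ℝ) : ℂ) - Complex.I) / (((-t : ℝ) : ℂ) + Complex.I)) ^ n = 1 := by
      rw [← mul_zpow]
      have h1 := hplus t
      have h2 := hminus t
      have h3 : (((-t : ℝ) : ℂ) + Complex.I) ≠ 0 := hplus (-t)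
      have h4 : (((-t : ℝ) : ℂ) - Complex.I) ≠ 0 := hminus (-t)
      have : ((t : ℂ) - Complex.I) / ((t : ℂ) + Complex.I) *
          ((((-t : ℝ) : ℂ) - Complex.I) / (((-t : ℝ) : ℂ) + Complex.I)) = 1 := by
        push_cast at h3 h4 ⊢
        field_simp
        ring
      rw [this, one_zpow]
    linear_combination key -
      (gm t * gp (-t) * gm (-t) * gp t) *
        ((((t : ℂ) - Complex.I) / ((t : ℂ) + Complex.I)) ^ n *
         ((((-t : ℝ) : ℂ) - Complex.I) / (((-t : ℝ) : ℂ) + Complex.I)) ^ n) * hA -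
      (gm t * gp (-t) * gm (-t) * gp t) * hB
  -- the glued function
  set U : Set ℂ := {z : ℂ | 0 ≤ z.im} with hUdef
  set L : Set ℂ := {z : ℂ | z.im ≤ 0} with hLdef
  set Θ : ℂ → ℂ := fun z => Fmi (-z) * Fpi z with hΘdef
  set Φ : ℂ → ℂ := fun z => Fm z * Fp (-z) with hΦdef
  have hmapUL : Set.MapsTo (fun z : ℂ => -z) U L := by
    intro z hz
    have hz1 : 0 ≤ z.im := hz
    show (-z).im ≤ 0
    rw [Complex.neg_im]; linarith
  have hmapLU : Set.MapsTo (fun z : ℂ => -z) L U := by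
    intro z hz
    have h1 : z.im ≤ 0 := hz
    show 0 ≤ (-z).im
    rw [Complex.neg_im]; linarith
  have hΘd : DifferentiableOn ℂ Θ U :=
    (hFmid.comp differentiable_neg.differentiableOn hmapUL).mul hFpid
  have hΦd : DifferentiableOn ℂ Φ L :=
    hFmd.mul (hFpd.comp differentiable_neg.differentiableOn hmapLU)
  have hΦreal : ∀ t : ℝ, Φ t = gm t * gp (-t) := by
    intro t
    have : -((t : ℝ) : ℂ) = ((-t : ℝ) : ℂ) := by push_cast; ring
    simp only [hΦdef, this, hFm, hFp]
  have hΘreal : ∀ t : ℝ, Θ t = (gm (-t))⁻¹ * (gp t)⁻¹ := by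
    intro t
    have : -((t : ℝ) : ℂ) = ((-t : ℝ) : ℂ) := by push_cast; ring
    simp only [hΘdef, this, hFmi, hFpi]
  have heq : ∀ z : ℂ, z.im = 0 → Θ z = Φ z := by
    intro z hz
    have hzre : ((z.re : ℝ) : ℂ) = z := Complex.ext rfl (by simp [hz])
    set t := z.re
    rw [← hzre, hΘreal t, hΦreal t, ← mul_inv]
    exact inv_eq_of_mul_eq_one_left (hφ t)
  set H : ℂ → ℂ := fun z => if 0 ≤ z.im then Θ z else Φ z with hHdef
  have hHdiff : Differentiable ℂ H := glue_halfplanes Θ Φ hΘd hΦd heq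
  -- boundedness
  obtain ⟨Cp, hCp⟩ := isBounded_iff_forall_norm_le.1 hFpb
  obtain ⟨Cpi, hCpi⟩ := isBounded_iff_forall_norm_le.1 hFpib
  obtain ⟨Cm, hCm⟩ := isBounded_iff_forall_norm_le.1 hFmb
  obtain ⟨Cmi, hCmi⟩ := isBounded_iff_forall_norm_le.1 hFmib
  have hHbd : IsBounded (Set.range H) := by
    rw [isBounded_iff_forall_norm_le]
    refine ⟨max (Cmi * Cpi) (Cm * Cp), ?_⟩
    rintro _ ⟨z, rfl⟩
    by_cases hz : 0 ≤ z.im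
    · have h1 : H z = Θ z := if_pos hz
      have hz1 : 0 ≤ z.im := hz
      have hmemz : -z ∈ L := by show (-z).im ≤ 0; rw [Complex.neg_im]; linarith
      have hm : Fmi (-z) ∈ Fmi '' L := ⟨-z, hmemz, rfl⟩
      have hp : Fpi z ∈ Fpi '' U := ⟨z, hz, rfl⟩
      rw [h1, hΘdef]
      calc ‖Fmi (-z) * Fpi z‖ = ‖Fmi (-z)‖ * ‖Fpi z‖ := norm_mul _ _
        _ ≤ Cmi * Cpi := mul_le_mul (hCmi _ hm) (hCpi _ hp) (norm_nonneg _)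
            ((norm_nonneg _).trans (hCmi _ hm))
        _ ≤ max (Cmi * Cpi) (Cm * Cp) := le_max_left _ _
    · have h1 : H z = Φ z := if_neg hz
      have hz' : z.im ≤ 0 := le_of_lt (not_le.1 hz)
      have hm : Fm z ∈ Fm '' L := ⟨z, hz', rfl⟩
      have hmemz : -z ∈ U := by show 0 ≤ (-z).im; rw [Complex.neg_im]; linarith
      have hp : Fp (-z) ∈ Fp '' U := ⟨-z, hmemz, rfl⟩
      rw [h1, hΦdef]
      calc ‖Fm z * Fp (-z)‖ = ‖Fm z‖ * ‖Fp (-z)‖ := norm_mul _ _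
        _ ≤ Cm * Cp := mul_le_mul (hCm _ hm) (hCp _ hp) (norm_nonneg _)
            ((norm_nonneg _).trans (hCm _ hm))
        _ ≤ max (Cmi * Cpi) (Cm * Cp) := le_max_right _ _
  have hconst : ∀ z : ℂ, H z = H 0 := fun z =>
    hHdiff.apply_eq_apply_of_bounded hHbd z 0
  -- evaluate the constant
  have hH0 : H 0 = gp 0 := by
    have h0 : H 0 = Θ 0 := if_pos (le_of_eq Complex.zero_im.symm)
    have h1 := heq 0 Complex.zero_im
    have h2 := hΦreal 0
    rw [Complex.ofReal_zero] at h2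
    rw [h0, h1, h2, hnorm, one_mul, neg_zero]
  have hkey : ∀ t : ℝ, gm t * gp (-t) = gp 0 := by
    intro t
    have h1 : H t = Θ t := if_pos (by simp)
    rw [hconst t, hH0] at h1
    have h2 : Θ ((t : ℝ) : ℂ) = Φ ((t : ℝ) : ℂ) := heq t (by simp)
    rw [h2, hΦreal t] at h1
    exact h1.symm
  have hc2 : gp 0 * gp 0 = 1 := by
    have h := hφ 0
    rw [neg_zero, hnorm] at h
    simpa using h
  have hgp0 : gp 0 ≠ 0 := by
    intro h
    rw [h, mul_zero] at hc2
    exact zero_ne_one hc2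
  -- σ(g) = gp 0
  have hσ : (-1 : ℂ) ^ n * g 0 = gp 0 := by
    have h0 := hfact 0
    have hr0 : (((0 : ℝ) : ℂ) - Complex.I) / (((0 : ℝ) : ℂ) + Complex.I) = -1 := by
      rw [Complex.ofReal_zero, zero_sub, zero_add, neg_div, div_self Complex.I_ne_zero]
    have he0 : Complex.exp (Complex.I * ν * ((0 : ℝ) : ℂ)) = 1 := by
      rw [Complex.ofReal_zero, mul_zero, Complex.exp_zero]
    rw [hr0, he0, hnorm, one_mul, one_mul] at h0
    rw [h0, ← mul_assoc, ← mul_zpow]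
    norm_num
  constructor
  · intro t
    rw [hσ]
    have hne : gp (-t) ≠ 0 := by
      intro h
      have hk := hkey t
      rw [h, mul_zero] at hk
      exact hgp0 hk.symm
    rw [eq_mul_inv_iff_mul_eq₀ hne]
    exact hkey t
  · rw [hσ]
    exact mul_self_eq_one_iff.1 hc2
end
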